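/- Let N, M, and subspaces 𝓔₁,…,𝓔_M ⊆ ℂ^N be given, and let x′ₘ, x″ₘ ∈ 𝓔ₘ for m = 1,…,M. Let {Q_{mn}}_{m,n=1}^M be binary diagonal N×N matrices (each diagonal entry 0 or 1) satisfying Σ_{m=1}^M Q_{mn} = Σ_{n=1}^M Q_{mn} = I for all n and all m respectively. Set K = max_{m,n} dim(𝓔ₘ + 𝓔ₙ). Assume: (i) for every pair m,n the subspace 𝓔ₘ + 𝓔ₙ satisfies the K-restricted full rank property; (ii) N ≥ M·K; (iii) x′_κ ≠ x′_λ for all κ ≠ λ. If the block relation holds, i.e. x′ₘ = Σ_{n=1}^M Q_{mn} x″ₙ for every m = 1,…,M, then there exists a permutation σ of {1,…,M} such that x′ₘ = x″_{σ(m)} for every m. -/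
import Mathlib


/-- The coordinate projection `ℂ^N → ℂ^N` that preserves the coordinates in `S`
and zeroes out all other coordinates. -/
noncomputable def coordProj {N : ℕ} (S : Finset (Fin N)) :
    (Fin N → ℂ) →ₗ[ℂ] (Fin N → ℂ) :=
  LinearMap.pi fun i => if i ∈ S then LinearMap.proj i else 0

/-- A linear subspace `𝓔 ⊆ ℂ^N` satisfies the `K`-restricted full rank property if
every coordinate projection preserving at least `K` coordinates maps `𝓔` to a subspace
of the same dimension. -/
def RFRP {N : ℕ} (K : ℕ) (E : Submodule ℂ (Fin N → ℂ)) : Prop :=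
  ∀ S : Finset (Fin N), K ≤ S.card →
    Module.finrank ℂ (E.map (coordProj S)) = Module.finrank ℂ E


lemma coordProj_apply {N : ℕ} (S : Finset (Fin N)) (v : Fin N → ℂ) (i : Fin N) :
    coordProj S v i = if i ∈ S then v i else 0 := by
  rw [coordProj, LinearMap.pi_apply]
  split <;> simp

lemma rfrp_inj {N K : ℕ} {E : Submodule ℂ (Fin N → ℂ)} (h : RFRP K E)
    {S : Finset (Fin N)} (hS : K ≤ S.card) {v : Fin N → ℂ} (hv : v ∈ E)
    (h0 : coordProj S v = 0) : v = 0 := by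
  have hker : LinearMap.ker ((coordProj S).domRestrict E) = ⊥ := by
    have h1 := LinearMap.finrank_range_add_finrank_ker ((coordProj S).domRestrict E)
    rw [LinearMap.range_domRestrict, h S hS] at h1
    have h2 : Module.finrank ℂ (LinearMap.ker ((coordProj S).domRestrict E)) = 0 := by omega
    exact Submodule.finrank_eq_zero.mp h2
  have : (⟨v, hv⟩ : E) ∈ LinearMap.ker ((coordProj S).domRestrict E) := by
    simp [LinearMap.mem_ker, LinearMap.domRestrict_apply, h0]
  rw [hker, Submodule.mem_bot] at this
  exact congrArg Subtype.val this

/-- **Theorem 1 (cross-channel unlabeled sensing over a union of subspaces).** -/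
theorem cross_channel_unlabeled_sensing
    {N M : ℕ} (E : Fin M → Submodule ℂ (Fin N → ℂ))
    (x' x'' : Fin M → Fin N → ℂ)
    (hx' : ∀ m, x' m ∈ E m) (hx'' : ∀ m, x'' m ∈ E m)
    (Q : Fin M → Fin M → Matrix (Fin N) (Fin N) ℂ)
    (hdiag : ∀ m n, (Q m n).IsDiag)
    (hbin : ∀ m n i, Q m n i i = 0 ∨ Q m n i i = 1)
    (hcol : ∀ n, ∑ m, Q m n = 1)
    (hrow : ∀ m, ∑ n, Q m n = 1)
    (K : ℕ)
    (hK : K = Finset.univ.sup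
      (fun mn : Fin M × Fin M => Module.finrank ℂ ((E mn.1 ⊔ E mn.2 : Submodule ℂ (Fin N → ℂ)))))
    (hRFRP : ∀ m n, RFRP K (E m ⊔ E n))
    (hN : M * K ≤ N)
    (hdistinct : ∀ κ l, κ ≠ l → x' κ ≠ x' l)
    (hrel : ∀ m, x' m = ∑ n, (Q m n).mulVec (x'' n)) :
    ∃ σ : Equiv.Perm (Fin M), ∀ m, x' m = x'' (σ m) := by
  have key : ∀ m, ∃ n, x' m = x'' n := by
    intro m
    have huniq : ∀ i : Fin N, ∃! n, Q m n i i = 1 := by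
      intro i
      have hsum : ∑ n, Q m n i i = 1 := by
        have := congrFun (congrFun (hrow m) i) i
        simpa [Matrix.sum_apply, Matrix.one_apply_eq] using this
      have hcard : (Finset.univ.filter (fun n => Q m n i i = 1)).card = 1 := by
        have heq : ∑ n, Q m n i i
            = ((Finset.univ.filter (fun n => Q m n i i = 1)).card : ℂ) := by
          rw [← Finset.sum_boole]
          refine Finset.sum_congr rfl fun n _ => ?_
          rcases hbin m n i with h | h <;> simp [h]
        rw [heq] at hsum
        exact_mod_cast hsum
      rw [Finset.card_eq_one] at hcard
      obtain ⟨n₀, hn₀⟩ := hcard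
      refine ⟨n₀, ?_, ?_⟩
      · have : n₀ ∈ Finset.univ.filter (fun n => Q m n i i = 1) :=
          hn₀ ▸ Finset.mem_singleton_self n₀
        exact (Finset.mem_filter.mp this).2
      · intro n hn
        have hmem : n ∈ Finset.univ.filter (fun n => Q m n i i = 1) :=
          Finset.mem_filter.mpr ⟨Finset.mem_univ n, hn⟩
        rw [hn₀] at hmem
        exact Finset.mem_singleton.mp hmem
    choose τ hτ1 hτ2 using huniq
    have hcoord : ∀ i, x' m i = x'' (τ i) i := by
      intro i
      have h1 : x' m i = ∑ n, Q m n i i * x'' n i := by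
        have h := congrFun (hrel m) i
        rw [h, Finset.sum_apply]
        refine Finset.sum_congr rfl fun n _ => ?_
        rw [Matrix.mulVec, dotProduct]
        exact Finset.sum_eq_single i
          (fun j _ hj => by rw [hdiag m n (Ne.symm hj), zero_mul]) (by simp)
      rw [h1, Finset.sum_eq_single (τ i)]
      · rw [hτ1 i, one_mul]
      · intro n _ hn
        rcases hbin m n i with h | h
        · rw [h, zero_mul]
        · exact absurd (hτ2 i n h) hn
      · simp
    obtain ⟨n, hn⟩ : ∃ n, K ≤ (Finset.univ.filter (fun i => τ i = n)).card := by
      by_contra hc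
      push_neg at hc
      have hpart : (Finset.univ : Finset (Fin N)).card
          = ∑ n, (Finset.univ.filter (fun i => τ i = n)).card :=
        Finset.card_eq_sum_card_fiberwise (fun i _ => Finset.mem_univ (τ i))
      have hlt : ∑ n, (Finset.univ.filter (fun i => τ i = n)).card < ∑ _n : Fin M, K :=
        Finset.sum_lt_sum_of_nonempty ⟨m, Finset.mem_univ m⟩ (fun n _ => hc n)
      simp [Finset.card_univ, Finset.sum_const, Finset.card_fin] at hpart hlt
      omega
    refine ⟨n, ?_⟩
    have hmem : x' m - x'' n ∈ E m ⊔ E n :=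
      Submodule.sub_mem _ (Submodule.mem_sup_left (hx' m)) (Submodule.mem_sup_right (hx'' n))
    have h0 : coordProj (Finset.univ.filter (fun i => τ i = n)) (x' m - x'' n) = 0 := by
      funext i
      rw [coordProj_apply]
      split
      · next hi =>
        have hti := (Finset.mem_filter.mp hi).2
        have h2 : x' m i = x'' n i := by rw [hcoord i, hti]
        simp [h2]
      · rfl
    exact sub_eq_zero.mp (rfrp_inj (hRFRP m n) hn hmem h0)
  choose g hg using key
  have hinj : Function.Injective g := by
    intro a b hab
    by_contra hne
    exact hdistinct a b hne (by rw [hg a, hg b, hab])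
  exact ⟨Equiv.ofBijective g (Finite.injective_iff_bijective.mp hinj),
    fun m => by simpa [Equiv.ofBijective] using hg m⟩
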